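/- Let A be a Novikov algebra over a field k of characteristic zero and let I and J be two-sided ideals of A. Then the subspace I·J spanned by all products x·y with x ∈ I, y ∈ J is also a two-sided ideal of A. -/

import Mathlib

/-!
For `x ∈ I`, `y ∈ J` the left-symmetric identity gives
`a(xy) = x(ay) - (xa)y + (ax)y`, and right commutativity gives `(xy)a = (xa)y`;
every term on the right is again a product of an element of `I` with one of `J`.
-/

namespace Submodule

variable {R M : Type*} [CommRing R] [AddCommGroup M] [Module R M] (mul : M →ₗ[R] M →ₗ[R] M)

theorem span_setOf_mul_eq_map₂ (I J : Submodule R M) :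
    span R {z : M | ∃ x ∈ I, ∃ y ∈ J, z = mul x y} = map₂ mul I J := by
  rw [map₂_eq_span_image2]
  congr 1
  ext z
  constructor <;> rintro ⟨x, hx, y, hy, rfl⟩ <;> exact ⟨x, hx, y, hy, rfl⟩

theorem mul_left_mem_map₂
    (hls : ∀ x y z : M,
      mul x (mul y z) - mul (mul x y) z = mul y (mul x z) - mul (mul y x) z)
    {I J : Submodule R M} (hIl : ∀ a, ∀ x ∈ I, mul a x ∈ I) (hIr : ∀ a, ∀ x ∈ I, mul x a ∈ I)
    (hJl : ∀ a, ∀ y ∈ J, mul a y ∈ J) (a : M) {w : M} (hw : w ∈ map₂ mul I J) :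
    mul a w ∈ map₂ mul I J := by
  suffices map₂ mul I J ≤ (map₂ mul I J).comap (mul a) from this hw
  refine map₂_le.mpr fun x hx y hy => ?_
  have hexpand : mul a (mul x y) = mul x (mul a y) - mul (mul x a) y + mul (mul a x) y :=
    sub_eq_iff_eq_add.mp (hls a x y)
  rw [mem_comap, hexpand]
  exact add_mem (sub_mem (apply_mem_map₂ _ hx (hJl a y hy)) (apply_mem_map₂ _ (hIr a x hx) hy))
    (apply_mem_map₂ _ (hIl a x hx) hy)

theorem mul_right_mem_map₂ (hnov : ∀ x y z : M, mul (mul x y) z = mul (mul x z) y)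
    {I J : Submodule R M} (hIr : ∀ a, ∀ x ∈ I, mul x a ∈ I) (a : M) {w : M}
    (hw : w ∈ map₂ mul I J) :
    mul w a ∈ map₂ mul I J := by
  suffices map₂ mul I J ≤ (map₂ mul I J).comap (mul.flip a) from this hw
  refine map₂_le.mpr fun x hx y hy => ?_
  rw [mem_comap, LinearMap.flip_apply, hnov]
  exact apply_mem_map₂ _ (hIr a x hx) hy

end Submodule

theorem novikov_ideal_mul_ideal
    {k A : Type*} [Field k] [AddCommGroup A] [Module k A]
    (mul : A →ₗ[k] A →ₗ[k] A)
    (hls : ∀ x y z : A,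
      mul x (mul y z) - mul (mul x y) z = mul y (mul x z) - mul (mul y x) z)
    (hnov : ∀ x y z : A, mul (mul x y) z = mul (mul x z) y)
    (I J : Submodule k A)
    (hI : ∀ a : A, ∀ x ∈ I, mul a x ∈ I ∧ mul x a ∈ I)
    (hJ : ∀ a : A, ∀ y ∈ J, mul a y ∈ J ∧ mul y a ∈ J) :
    ∀ a : A, ∀ w ∈ Submodule.span k {z : A | ∃ x ∈ I, ∃ y ∈ J, z = mul x y},
      mul a w ∈ Submodule.span k {z : A | ∃ x ∈ I, ∃ y ∈ J, z = mul x y} ∧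
      mul w a ∈ Submodule.span k {z : A | ∃ x ∈ I, ∃ y ∈ J, z = mul x y} := by
  rw [Submodule.span_setOf_mul_eq_map₂]
  intro a w hw
  have hIl : ∀ a, ∀ x ∈ I, mul a x ∈ I := fun a x hx => (hI a x hx).1
  have hIr : ∀ a, ∀ x ∈ I, mul x a ∈ I := fun a x hx => (hI a x hx).2
  have hJl : ∀ a, ∀ y ∈ J, mul a y ∈ J := fun a y hy => (hJ a y hy).1
  exact ⟨Submodule.mul_left_mem_map₂ mul hls hIl hIr hJl a hw,
    Submodule.mul_right_mem_map₂ mul hnov hIr a hw⟩
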